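/- For every T > 0 and every τ ∈ [0, T], one has ξ_T(τ) ≥ (g₁g₂/(a₂a₃)) · 1/(e^{a₁T} − 1). (This is the ultimate lower bound of Lemma 1 specialized to the 1-cycle with unit dose and period T, whose output at phase τ equals ξ_T(τ).) -/

import Mathlib

open Matrix

/-- The system matrix of the third-order PK model. -/
noncomputable def Amat (a₁ a₂ a₃ g₁ g₂ : ℝ) : Matrix (Fin 3) (Fin 3) ℝ :=
  !![-a₁, 0, 0; g₁, -a₂, 0; 0, g₂, -a₃]

/-- The input vector `B = (1,0,0)ᵀ`. -/
noncomputable def Bvec : Fin 3 → ℝ := ![1, 0, 0]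

/-- The output map `C x = x₃`. -/
noncomputable def Cout (x : Fin 3 → ℝ) : ℝ := x 2

/-- `ξ_T(τ) = C e^{τA} (I − e^{TA})⁻¹ B`, the output at phase `τ` of the 1-cycle
with unit dose and inter-dose interval `T`. -/
noncomputable def xi (a₁ a₂ a₃ g₁ g₂ : ℝ) (T τ : ℝ) : ℝ :=
  Cout ((NormedSpace.exp (τ • Amat a₁ a₂ a₃ g₁ g₂) *
    (1 - NormedSpace.exp (T • Amat a₁ a₂ a₃ g₁ g₂))⁻¹).mulVec Bvec)

open Set

/-!
Write `X(s) = e^{sA} (I − e^{TA})⁻¹`. Its first column `x(s)` solves `x' = A x` with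
`x(0) − x(T) = B`, and `ξ_T(τ)` is the last component of `x(τ)`: the dose enters the first
compartment while the other two are `T`-periodic. The first component decays like `e^{−a₁s}`,
so on `[0, T]` it stays above its value at `s = T`, which the jump condition pins down as
`1/(e^{a₁T} − 1)`. A `T`-periodic solution of `y' = g u − a y` with `u ≥ m` satisfies
`y ≥ g m / a`, because `e^{as}(y − g m/a)` is nondecreasing and gets multiplied by `e^{aT} > 1`
over a period. Applying this to the second and then to the third compartment gives the bound.
-/

lemma eq_exp_mul_mul_of_hasDerivAt {f : ℝ → ℝ} {c : ℝ} (hf : ∀ s, HasDerivAt f (c * f s) s)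
    (t : ℝ) : f t = Real.exp (c * t) * f 0 := by
  have hg : ∀ s, HasDerivAt (fun s => Real.exp (-c * s) * f s) 0 s := fun s =>
    (((hasDerivAt_id' s).const_mul (-c)).exp.mul (hf s)).congr_deriv (by ring)
  have hconst := is_const_of_deriv_eq_zero (fun s => (hg s).differentiableAt)
    (fun s => (hg s).deriv) t 0
  rw [mul_zero, Real.exp_zero, one_mul] at hconst
  rw [← hconst, ← mul_assoc, ← Real.exp_add, neg_mul, add_neg_cancel, Real.exp_zero, one_mul]

lemma le_of_hasDerivAt_of_periodic {f f' : ℝ → ℝ} {a c T : ℝ} (ha : 0 < a) (hT : 0 < T)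
    (hf : ∀ s ∈ Icc 0 T, HasDerivAt f (f' s) s) (hf' : ∀ s ∈ Icc 0 T, a * c ≤ f' s + a * f s)
    (hper : f T = f 0) : ∀ τ ∈ Icc 0 T, c ≤ f τ := by
  set u : ℝ → ℝ := fun s => Real.exp (a * s) * (f s - c)
  have hu : ∀ s ∈ Icc 0 T, HasDerivAt u (Real.exp (a * s) * (f' s + a * f s - a * c)) s :=
    fun s hs => (((hasDerivAt_id' s).const_mul a).exp.mul ((hf s hs).sub_const c)).congr_deriv
      (by ring)
  have hmono : MonotoneOn u (Icc 0 T) := by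
    refine monotoneOn_of_deriv_nonneg (convex_Icc 0 T)
      (HasDerivAt.continuousOn hu) (fun s hs => ?_) (fun s hs => ?_)
    · exact (hu s (interior_subset hs)).differentiableAt.differentiableWithinAt
    · rw [(hu s (interior_subset hs)).deriv]
      exact mul_nonneg (Real.exp_pos _).le (sub_nonneg.2 (hf' s (interior_subset hs)))
  have h0 : (0 : ℝ) ∈ Icc 0 T := left_mem_Icc.2 hT.le
  have hu0 : 0 ≤ u 0 := by
    have hle : u 0 ≤ u T := hmono h0 (right_mem_Icc.2 hT.le) hT.le
    have hgt : 1 < Real.exp (a * T) := Real.one_lt_exp_iff.2 (mul_pos ha hT)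
    simp only [u, hper, mul_zero, Real.exp_zero, one_mul] at hle ⊢
    nlinarith
  intro τ hτ
  have hτ' : 0 ≤ Real.exp (a * τ) * (f τ - c) := hu0.trans (hmono h0 hτ hτ.1)
  exact sub_nonneg.1 (nonneg_of_mul_nonneg_right hτ' (Real.exp_pos _))

lemma one_div_exp_sub_one_le_of_hasDerivAt {f : ℝ → ℝ} {a T : ℝ} (ha : 0 < a) (hT : 0 < T)
    (hf : ∀ s, HasDerivAt f (-a * f s) s) (hjump : f 0 - f T = 1) :
    ∀ s ∈ Icc 0 T, 1 / (Real.exp (a * T) - 1) ≤ f s := by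
  have hsol := eq_exp_mul_mul_of_hasDerivAt hf
  have hgt : 1 < Real.exp (a * T) := Real.one_lt_exp_iff.2 (mul_pos ha hT)
  have hfT : f T = 1 / (Real.exp (a * T) - 1) := by
    have hf0 : f 0 = Real.exp (a * T) * f T := by
      rw [hsol T, ← mul_assoc, ← Real.exp_add, neg_mul, add_neg_cancel, Real.exp_zero, one_mul]
    rw [eq_div_iff (by linarith)]
    linarith
  have hf0 : 0 ≤ f 0 := by
    have : 0 < f T := hfT ▸ div_pos one_pos (by linarith)
    linarith
  intro s hs
  rw [← hfT, hsol s, hsol T]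
  exact mul_le_mul_of_nonneg_right (Real.exp_le_exp.2 (by nlinarith [hs.2])) hf0

lemma le_of_cascade_of_periodic {x₀ x₁ x₂ : ℝ → ℝ} {a₂ a₃ g₁ g₂ m T : ℝ}
    (ha₂ : 0 < a₂) (ha₃ : 0 < a₃) (hg₁ : 0 < g₁) (hg₂ : 0 < g₂) (hT : 0 < T)
    (hx₁ : ∀ s, HasDerivAt x₁ (g₁ * x₀ s - a₂ * x₁ s) s)
    (hx₂ : ∀ s, HasDerivAt x₂ (g₂ * x₁ s - a₃ * x₂ s) s)
    (hper₁ : x₁ T = x₁ 0) (hper₂ : x₂ T = x₂ 0) (hm : ∀ s ∈ Icc 0 T, m ≤ x₀ s) :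
    ∀ τ ∈ Icc 0 T, g₁ * g₂ / (a₂ * a₃) * m ≤ x₂ τ := by
  have h₁ : ∀ s ∈ Icc 0 T, g₁ * m / a₂ ≤ x₁ s :=
    le_of_hasDerivAt_of_periodic ha₂ hT (fun s _ => hx₁ s) (fun s hs => by
      rw [mul_div_cancel₀ _ ha₂.ne']
      nlinarith [hm s hs]) hper₁
  have h₂ : ∀ s ∈ Icc 0 T, g₂ * (g₁ * m / a₂) / a₃ ≤ x₂ s :=
    le_of_hasDerivAt_of_periodic ha₃ hT (fun s _ => hx₂ s) (fun s hs => by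
      rw [mul_div_cancel₀ _ ha₃.ne']
      nlinarith [h₁ s hs]) hper₂
  intro τ hτ
  calc g₁ * g₂ / (a₂ * a₃) * m = g₂ * (g₁ * m / a₂) / a₃ := by field_simp
    _ ≤ x₂ τ := h₂ τ hτ

namespace Matrix

variable {m : Type*} [LinearOrder m]

lemma IsLowerTriangular.mul_apply_self [Fintype m] {R : Type*} [NonUnitalNonAssocSemiring R]
    {A B : Matrix m m R} (hA : A.IsLowerTriangular) (hB : B.IsLowerTriangular) (i : m) :
    (A * B) i i = A i i * B i i := by
  rw [mul_apply, Finset.sum_eq_single i]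
  · intro k _ hki
    rcases hki.lt_or_gt with hlt | hgt
    · rw [hB hlt, mul_zero]
    · rw [hA hgt, zero_mul]
  · simp

lemma IsLowerTriangular.smul {R S : Type*} [Zero R] [SMulZeroClass S R] {A : Matrix m m R}
    (hA : A.IsLowerTriangular) (s : S) : (s • A).IsLowerTriangular :=
  fun _ _ h => by rw [smul_apply, hA h, smul_zero]

variable [Fintype m]

-- `NormedSpace.exp` only depends on the topology, so any algebra norm will do.
attribute [local instance] Matrix.linftyOpNormedRing Matrix.linftyOpNormedAlgebra

lemma hasDerivAt_exp_smul_mul_apply (A X : Matrix m m ℝ) (i j : m) (s : ℝ) :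
    HasDerivAt (fun t : ℝ => (NormedSpace.exp (t • A) * X) i j)
      ((A * (NormedSpace.exp (s • A) * X)) i j) s := by
  have hE := (hasDerivAt_exp_smul_const' A s).mul_const X
  rw [mul_assoc] at hE
  exact (LinearMap.toContinuousLinearMap (entryLinearMap ℝ ℝ i j)).hasFDerivAt.comp_hasDerivAt s hE

lemma IsLowerTriangular.exp_smul_apply_self {A : Matrix m m ℝ} (hA : A.IsLowerTriangular)
    (s : ℝ) (i : m) : NormedSpace.exp (s • A) i i = Real.exp (A i i * s) := by
  have hderiv (t : ℝ) : HasDerivAt (fun t : ℝ => NormedSpace.exp (t • A) i i)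
      (A i i * NormedSpace.exp (t • A) i i) t := by
    simpa [← hA.mul_apply_self ((hA.smul t).exp) i] using
      hasDerivAt_exp_smul_mul_apply A 1 i i t
  simpa using eq_exp_mul_mul_of_hasDerivAt hderiv s

lemma IsLowerTriangular.isUnit_det_one_sub_exp_smul {A : Matrix m m ℝ}
    (hA : A.IsLowerTriangular) (hdiag : ∀ i, A i i < 0) {T : ℝ} (hT : 0 < T) :
    IsUnit (1 - NormedSpace.exp (T • A)).det := by
  rw [det_of_isLowerTriangular _ (blockTriangular_one.sub (hA.smul T).exp)]
  refine IsUnit.mk0 _ (Finset.prod_ne_zero_iff.2 fun i _ => ?_)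
  rw [sub_apply, one_apply_eq, hA.exp_smul_apply_self, sub_ne_zero, ne_comm]
  exact (Real.exp_lt_one_iff.2 (mul_neg_of_neg_of_pos (hdiag i) hT)).ne

end Matrix

section OneCycle

variable {a₁ a₂ a₃ g₁ g₂ : ℝ}

lemma Amat_isLowerTriangular : (Amat a₁ a₂ a₃ g₁ g₂).IsLowerTriangular := by
  intro i j h
  rw [OrderDual.toDual_lt_toDual] at h
  fin_cases i <;> fin_cases j <;> simp_all [Amat]

lemma Amat_mul_apply_zero (X : Matrix (Fin 3) (Fin 3) ℝ) (j : Fin 3) :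
    (Amat a₁ a₂ a₃ g₁ g₂ * X) 0 j = -a₁ * X 0 j := by
  simp [Amat, mul_apply, Fin.sum_univ_three]

lemma Amat_mul_apply_one (X : Matrix (Fin 3) (Fin 3) ℝ) (j : Fin 3) :
    (Amat a₁ a₂ a₃ g₁ g₂ * X) 1 j = g₁ * X 0 j - a₂ * X 1 j := by
  simp [Amat, mul_apply, Fin.sum_univ_three, sub_eq_add_neg]

lemma Amat_mul_apply_two (X : Matrix (Fin 3) (Fin 3) ℝ) (j : Fin 3) :
    (Amat a₁ a₂ a₃ g₁ g₂ * X) 2 j = g₂ * X 1 j - a₃ * X 2 j := by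
  simp [Amat, mul_apply, Fin.sum_univ_three, sub_eq_add_neg]

lemma xi_eq_apply (T τ : ℝ) : xi a₁ a₂ a₃ g₁ g₂ T τ =
    (NormedSpace.exp (τ • Amat a₁ a₂ a₃ g₁ g₂) *
      (1 - NormedSpace.exp (T • Amat a₁ a₂ a₃ g₁ g₂))⁻¹) 2 0 := by
  simp [xi, Cout, Bvec, mulVec, dotProduct, Fin.sum_univ_three]

end OneCycle

/-- Lower bound for the unit-dose 1-cycle output:
`ξ_T(τ) ≥ (g₁g₂/(a₂a₃)) · 1/(e^{a₁T} − 1)` for all `τ ∈ [0, T]`. -/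
theorem xi_lower_bound
    (a₁ a₂ a₃ g₁ g₂ : ℝ)
    (ha₁ : 0 < a₁) (ha₂ : 0 < a₂) (ha₃ : 0 < a₃) (hg₁ : 0 < g₁) (hg₂ : 0 < g₂)
    (T : ℝ) (hT : 0 < T) (τ : ℝ) (hτ : τ ∈ Set.Icc (0 : ℝ) T) :
    g₁ * g₂ / (a₂ * a₃) * (1 / (Real.exp (a₁ * T) - 1)) ≤ xi a₁ a₂ a₃ g₁ g₂ T τ := by
  set A := Amat a₁ a₂ a₃ g₁ g₂
  set X : ℝ → Matrix (Fin 3) (Fin 3) ℝ :=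
    fun s => NormedSpace.exp (s • A) * (1 - NormedSpace.exp (T • A))⁻¹
  have hdet : IsUnit (1 - NormedSpace.exp (T • A)).det :=
    Amat_isLowerTriangular.isUnit_det_one_sub_exp_smul
      (fun i => by fin_cases i <;> simp [Amat, *]) hT
  have hjump : X 0 - X T = 1 := by
    simp only [X, zero_smul, NormedSpace.exp_zero, ← sub_mul, mul_nonsing_inv _ hdet]
  have hper (i : Fin 3) (hi : i ≠ 0) : X T i 0 = X 0 i 0 := by
    have := congrFun₂ hjump i 0
    rw [Matrix.sub_apply, one_apply_ne hi] at this
    linarith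
  have hX (i : Fin 3) (s : ℝ) : HasDerivAt (fun t => X t i 0) ((A * X s) i 0) s :=
    hasDerivAt_exp_smul_mul_apply A _ i 0 s
  have hx₀ := one_div_exp_sub_one_le_of_hasDerivAt ha₁ hT
    (fun s => Amat_mul_apply_zero (X s) 0 ▸ hX 0 s) (by simpa using congrFun₂ hjump 0 0)
  rw [xi_eq_apply]
  exact le_of_cascade_of_periodic ha₂ ha₃ hg₁ hg₂ hT
    (fun s => Amat_mul_apply_one (X s) 0 ▸ hX 1 s) (fun s => Amat_mul_apply_two (X s) 0 ▸ hX 2 s)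
    (hper 1 (by decide)) (hper 2 (by decide)) hx₀ τ hτ
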